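/- Fix an integer N ≥ 0. The real linear span of the N+1 polynomials ((1−c)/2)^k · P_{N−k}^{(2k+3,0)}(c), for k = 0, 1, …, N, equals the space of all real polynomials in c of degree at most N. -/
import Mathlib


open Finset Polynomial in
/-- The Jacobi polynomial `P_n^{(α,0)}` as a real polynomial, via the explicit formula
`P_n^{(α,0)}(x) = ∑_{s=0}^{n} C(n+α, n−s)·C(n, s)·((x−1)/2)^s·((x+1)/2)^{n−s}`. -/
noncomputable def jacobiPoly (n α : ℕ) : Polynomial ℝ :=
  ∑ s ∈ range (n + 1),
    C (((n + α).choose (n - s) : ℝ) * (n.choose s : ℝ)) *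
      (C (2⁻¹ : ℝ) * (X - 1)) ^ s * (C (2⁻¹ : ℝ) * (X + 1)) ^ (n - s)

section Aux
open Finset Polynomial

lemma jacobi_natDegree_le (n α : ℕ) : (jacobiPoly n α).natDegree ≤ n := by
  apply Polynomial.natDegree_sum_le_of_forall_le
  intro s hs
  simp only [mem_range, Nat.lt_succ_iff] at hs
  calc (C (((n + α).choose (n - s) : ℝ) * (n.choose s : ℝ)) *
      (C (2⁻¹ : ℝ) * (X - 1)) ^ s * (C (2⁻¹ : ℝ) * (X + 1)) ^ (n - s)).natDegree
      ≤ (C (((n + α).choose (n - s) : ℝ) * (n.choose s : ℝ)) *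
      (C (2⁻¹ : ℝ) * (X - 1)) ^ s).natDegree + ((C (2⁻¹ : ℝ) * (X + 1)) ^ (n - s)).natDegree :=
        natDegree_mul_le
    _ ≤ n := by
        have h1 : (C (2⁻¹ : ℝ) * (X - 1)).natDegree ≤ 1 := by
          refine natDegree_mul_le.trans ?_
          rw [natDegree_C, ← Polynomial.C_1 (R := ℝ), natDegree_X_sub_C]
        have h2 : (C (2⁻¹ : ℝ) * (X + 1)).natDegree ≤ 1 := by
          refine natDegree_mul_le.trans ?_
          rw [natDegree_C, ← Polynomial.C_1 (R := ℝ), natDegree_X_add_C]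
        have h3 := natDegree_pow_le (p := C (2⁻¹ : ℝ) * (X - 1)) (n := s)
        have h4 := natDegree_pow_le (p := C (2⁻¹ : ℝ) * (X + 1)) (n := n - s)
        have h5 : (C (((n + α).choose (n - s) : ℝ) * (n.choose s : ℝ)) *
            (C (2⁻¹ : ℝ) * (X - 1)) ^ s).natDegree ≤ 0 + s * 1 := by
          refine natDegree_mul_le.trans (add_le_add (le_of_eq (natDegree_C _)) ?_)
          exact h3.trans (Nat.mul_le_mul_left s h1)
        have h6 := h4.trans (Nat.mul_le_mul_left (n - s) h2)
        omega

lemma jacobi_eval_one (n α : ℕ) : eval 1 (jacobiPoly n α) = ((n + α).choose n : ℝ) := by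
  unfold jacobiPoly
  rw [eval_finset_sum]
  rw [Finset.sum_eq_single 0]
  · norm_num
  · intro s hs hs0
    simp [zero_pow hs0, sub_self]
  · simp

lemma key_mem (N : ℕ) (r : ℕ → Polynomial ℝ)
    (hdeg : ∀ k ≤ N, (r k).natDegree ≤ N - k)
    (hval : ∀ k ≤ N, eval 1 (r k) ≠ 0) :
    ∀ m k, k + m = N + 1 → ∀ p : Polynomial ℝ, p.natDegree ≤ N → (X - 1) ^ k ∣ p →
      p ∈ Submodule.span ℝ {q : Polynomial ℝ | ∃ k ≤ N, q = (X - 1) ^ k * r k} := by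
  intro m
  induction m with
  | zero =>
    intro k hk p hp hdvd
    have hk' : k = N + 1 := by omega
    subst hk'
    by_cases hp0 : p = 0
    · simp [hp0]
    · exfalso
      have := Polynomial.natDegree_le_of_dvd hdvd hp0
      rw [Polynomial.natDegree_pow] at this
      rw [show (1 : Polynomial ℝ) = C 1 by simp, natDegree_X_sub_C] at this
      omega
  | succ m ih =>
    intro k hk p hp hdvd
    have hkN : k ≤ N := by omega
    obtain ⟨s, rfl⟩ := hdvd
    by_cases hs0 : s = 0
    · simp [hs0]
    have hXk : ((X : Polynomial ℝ) - 1) ^ k ≠ 0 := by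
      apply pow_ne_zero
      rw [show (1 : Polynomial ℝ) = C 1 by simp]
      exact X_sub_C_ne_zero 1
    have hsdeg : s.natDegree ≤ N - k := by
      rw [Polynomial.natDegree_mul hXk hs0, Polynomial.natDegree_pow,
        show (1 : Polynomial ℝ) = C 1 by simp, natDegree_X_sub_C] at hp
      omega
    set c : ℝ := eval 1 s / eval 1 (r k) with hc
    have hdvd1 : (X - 1 : Polynomial ℝ) ∣ (s - C c * r k) := by
      rw [show (1 : Polynomial ℝ) = C 1 by simp, dvd_iff_isRoot]
      simp only [IsRoot, eval_sub, eval_mul, eval_C]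
      rw [hc, div_mul_cancel₀ _ (hval k hkN)]
      ring
    obtain ⟨t, ht⟩ := hdvd1
    have hp' : (X - 1) ^ k * s - C c * ((X - 1) ^ k * r k) = (X - 1) ^ (k + 1) * t := by
      rw [pow_succ]
      calc (X - 1 : Polynomial ℝ) ^ k * s - C c * ((X - 1) ^ k * r k)
          = (X - 1) ^ k * (s - C c * r k) := by ring
        _ = (X - 1) ^ k * ((X - 1) * t) := by rw [ht]
        _ = (X - 1) ^ k * (X - 1) * t := by ring
    have hdeg' : ((X - 1 : Polynomial ℝ)) ^ (k + 1) * t = (X - 1) ^ k * s - C c * ((X - 1) ^ k * r k) := hp'.symm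
    have hmem1 : (X - 1) ^ (k + 1) * t ∈
        Submodule.span ℝ {q : Polynomial ℝ | ∃ k ≤ N, q = (X - 1) ^ k * r k} := by
      apply ih (k + 1) (by omega)
      · rw [hdeg']
        refine (Polynomial.natDegree_sub_le _ _).trans ?_
        have h1 : ((X - 1 : Polynomial ℝ) ^ k * s).natDegree ≤ N := hp
        have h2 : (C c * ((X - 1 : Polynomial ℝ) ^ k * r k)).natDegree ≤ N := by
          refine natDegree_mul_le.trans ?_
          rw [natDegree_C]
          have : ((X - 1 : Polynomial ℝ) ^ k * r k).natDegree ≤ k * 1 + (N - k) := by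
            refine natDegree_mul_le.trans (add_le_add ?_ (hdeg k hkN))
            refine (natDegree_pow_le).trans (Nat.mul_le_mul_left k ?_)
            rw [show (1 : Polynomial ℝ) = C 1 by simp, natDegree_X_sub_C]
          omega
        omega
      · exact Dvd.intro t rfl
    have hmem2 : (X - 1 : Polynomial ℝ) ^ k * r k ∈
        Submodule.span ℝ {q : Polynomial ℝ | ∃ k ≤ N, q = (X - 1) ^ k * r k} :=
      Submodule.subset_span ⟨k, hkN, rfl⟩
    have : (X - 1 : Polynomial ℝ) ^ k * s
        = (X - 1) ^ (k + 1) * t + c • ((X - 1) ^ k * r k) := by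
      rw [smul_eq_C_mul, ← hp']; ring
    rw [this]
    exact Submodule.add_mem _ hmem1 (Submodule.smul_mem _ _ hmem2)


end Aux

open Polynomial in
/-- The span of the `N+1` polynomials `((1−c)/2)^k · P_{N−k}^{(2k+3,0)}(c)`, for
`k = 0, …, N`, is the space of all real polynomials of degree at most `N`. -/
theorem jacobi_family_span (N : ℕ) :
    Submodule.span ℝ
        {q : Polynomial ℝ |
          ∃ k ≤ N, q = (C (2⁻¹ : ℝ) * (1 - X)) ^ k * jacobiPoly (N - k) (2 * k + 3)}
      = Polynomial.degreeLE ℝ (N : ℕ) := by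
  set r : ℕ → Polynomial ℝ := fun k => C ((-2⁻¹ : ℝ) ^ k) * jacobiPoly (N - k) (2 * k + 3)
    with hr
  have hset : {q : Polynomial ℝ |
      ∃ k ≤ N, q = (C (2⁻¹ : ℝ) * (1 - X)) ^ k * jacobiPoly (N - k) (2 * k + 3)}
      = {q : Polynomial ℝ | ∃ k ≤ N, q = (X - 1) ^ k * r k} := by
    have hpoly : ∀ k : ℕ, (C (2⁻¹ : ℝ) * (1 - X)) ^ k = (X - 1) ^ k * C ((-2⁻¹ : ℝ) ^ k) := by
      intro k
      rw [map_pow, ← mul_pow]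
      congr 1
      rw [map_neg]
      ring
    ext q
    constructor
    · rintro ⟨k, hk, rfl⟩
      exact ⟨k, hk, by rw [hpoly k, hr]; ring⟩
    · rintro ⟨k, hk, rfl⟩
      exact ⟨k, hk, by rw [hpoly k, hr]; ring⟩
  rw [hset]
  have hdeg : ∀ k ≤ N, (r k).natDegree ≤ N - k := by
    intro k hk
    rw [hr]
    refine natDegree_mul_le.trans ?_
    rw [natDegree_C]
    simpa using jacobi_natDegree_le (N - k) (2 * k + 3)
  have hval : ∀ k ≤ N, eval 1 (r k) ≠ 0 := by
    intro k hk
    rw [hr]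
    simp only [eval_mul, eval_C, jacobi_eval_one]
    apply mul_ne_zero
    · exact pow_ne_zero _ (by norm_num)
    · exact_mod_cast (Nat.choose_pos (Nat.le_add_right _ _)).ne'
  apply le_antisymm
  · rw [Submodule.span_le]
    rintro q ⟨k, hk, rfl⟩
    rw [SetLike.mem_coe, Polynomial.mem_degreeLE]
    refine Polynomial.degree_le_of_natDegree_le ?_
    refine natDegree_mul_le.trans ?_
    have h1 : ((X - 1 : Polynomial ℝ) ^ k).natDegree ≤ k := by
      refine natDegree_pow_le.trans ?_
      rw [show (1 : Polynomial ℝ) = C 1 by simp, natDegree_X_sub_C]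
      omega
    have h2 := hdeg k hk
    omega
  · intro p hp
    rw [Polynomial.mem_degreeLE] at hp
    have hp' : p.natDegree ≤ N := Polynomial.natDegree_le_iff_degree_le.mpr hp
    exact key_mem N r hdeg hval (N + 1) 0 (by omega) p hp' (by simp)
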